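/- arXiv:1901.09788 — 4 statements merged into one kernel-verified Lean document; each statement's English description precedes it below -/
import Mathlib

section
/- Let F₁, F₂ : ℝ → ℝ be C¹ bijections with F₁'(t) > 0 and F₂'(t) > 0 for all t ∈ ℝ. Define u(x,y) = H₁(x) + H₂(y), where H₁ is an antiderivative of F₁⁻¹ and H₂ is an antiderivative of y ↦ F₂⁻¹(−y). Then u is a C² function on ℝ² that is not affine and satisfies F₁'(u_x)·u_xx + 2·B(x,y)·u_xy + F₂'(u_y)·u_yy = 0 for every function B : ℝ² → ℝ. -/
/-!
Because `u` separates, `u_xy = 0`, `u_x = F₁⁻¹(x)` and `u_y = F₂⁻¹(-y)`. Differentiating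
`F₁ ∘ F₁⁻¹ = id` gives `F₁'(u_x) u_xx = 1`, and likewise `F₂'(u_y) u_yy = -1`, so the equation
holds whatever `B` is. The inverse function theorem makes `F₁⁻¹`, `F₂⁻¹` of class `C¹`, hence
`u` of class `C²`, and `u` is not affine because `u_x = F₁⁻¹` is injective, not constant.
-/

open Function

noncomputable def ux (u : ℝ → ℝ → ℝ) (x y : ℝ) : ℝ := deriv (fun t => u t y) x
noncomputable def uy (u : ℝ → ℝ → ℝ) (x y : ℝ) : ℝ := deriv (fun t => u x t) y
noncomputable def uxx (u : ℝ → ℝ → ℝ) (x y : ℝ) : ℝ := deriv (fun t => ux u t y) x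
noncomputable def uxy (u : ℝ → ℝ → ℝ) (x y : ℝ) : ℝ := deriv (fun t => ux u x t) y
noncomputable def uyy (u : ℝ → ℝ → ℝ) (x y : ℝ) : ℝ := deriv (fun t => uy u x t) y

def IsAffine (u : ℝ → ℝ → ℝ) : Prop := ∃ a b c : ℝ, ∀ x y : ℝ, u x y = a * x + b * y + c

section InverseOfPositiveDerivative

variable {F : ℝ → ℝ}

theorem invFun_eq_orderIsoOfSurjective_symm (hF : StrictMono F) (hs : Surjective F) :
    invFun F = (hF.orderIsoOfSurjective F hs).symm := by
  funext x
  apply hF.injective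
  rw [invFun_eq (hs x)]
  exact ((hF.orderIsoOfSurjective F hs).apply_symm_apply x).symm

theorem hasDerivAt_invFun_of_deriv_pos (hF : Differentiable ℝ F) (hd : ∀ t, 0 < deriv F t)
    (hs : Surjective F) (x : ℝ) : HasDerivAt (invFun F) (deriv F (invFun F x))⁻¹ x := by
  have hm : StrictMono F := strictMono_of_deriv_pos hd
  have hcont : Continuous (invFun F) := by
    rw [invFun_eq_orderIsoOfSurjective_symm hm hs]
    exact (hm.orderIsoOfSurjective F hs).symm.continuous
  exact HasDerivAt.of_local_left_inverse hcont.continuousAt (hF _).hasDerivAt (hd _).ne'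
    (Filter.Eventually.of_forall (rightInverse_invFun hs))

theorem deriv_mul_deriv_invFun (hF : Differentiable ℝ F) (hd : ∀ t, 0 < deriv F t)
    (hs : Surjective F) (x : ℝ) : deriv F (invFun F x) * deriv (invFun F) x = 1 := by
  rw [(hasDerivAt_invFun_of_deriv_pos hF hd hs x).deriv, mul_inv_cancel₀ (hd _).ne']

theorem contDiff_invFun_of_deriv_pos {n : WithTop ℕ∞} (hF : ContDiff ℝ n F) (hn : n ≠ 0)
    (hd : ∀ t, 0 < deriv F t) (hs : Surjective F) : ContDiff ℝ n (invFun F) := by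
  have hm : StrictMono F := strictMono_of_deriv_pos hd
  rw [invFun_eq_orderIsoOfSurjective_symm hm hs, ← OrderIso.coe_toHomeomorph_symm]
  exact Homeomorph.contDiff_symm_deriv _ (fun t => (hd t).ne')
    (fun t => (hF.differentiable hn t).hasDerivAt) hF

end InverseOfPositiveDerivative

theorem contDiff_succ_of_hasDerivAt {H g : ℝ → ℝ} {n : ℕ} (hH : ∀ x, HasDerivAt H (g x) x)
    (hg : ContDiff ℝ n g) : ContDiff ℝ (n + 1) H := by
  rw [contDiff_succ_iff_deriv, funext fun x => (hH x).deriv]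
  exact ⟨fun x => (hH x).differentiableAt, by simp, hg⟩

section Separated

variable (H₁ H₂ : ℝ → ℝ) (x y : ℝ)

theorem ux_separated : ux (fun x y => H₁ x + H₂ y) x y = deriv H₁ x :=
  deriv_add_const _

theorem uy_separated : uy (fun x y => H₁ x + H₂ y) x y = deriv H₂ y :=
  deriv_const_add _

theorem uxx_separated : uxx (fun x y => H₁ x + H₂ y) x y = deriv (deriv H₁) x := by
  simp only [uxx, ux_separated]

theorem uxy_separated : uxy (fun x y => H₁ x + H₂ y) x y = 0 := by
  simp only [uxy, ux_separated, deriv_const]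

theorem uyy_separated : uyy (fun x y => H₁ x + H₂ y) x y = deriv (deriv H₂) y := by
  simp only [uyy, uy_separated]

end Separated

theorem IsAffine.exists_forall_ux_eq {u : ℝ → ℝ → ℝ} (hu : IsAffine u) :
    ∃ a, ∀ x y, ux u x y = a := by
  obtain ⟨a, b, c, habc⟩ := hu
  refine ⟨a, fun x y => ?_⟩
  simp [ux, habc]

theorem stmt5 (F₁ F₂ : ℝ → ℝ) (hF₁ : ContDiff ℝ 1 F₁) (hF₂ : ContDiff ℝ 1 F₂)
    (hb₁ : Function.Bijective F₁) (hb₂ : Function.Bijective F₂)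
    (hp₁ : ∀ t : ℝ, 0 < deriv F₁ t) (hp₂ : ∀ t : ℝ, 0 < deriv F₂ t)
    (H₁ H₂ : ℝ → ℝ)
    (hH₁ : ∀ x : ℝ, HasDerivAt H₁ (Function.invFun F₁ x) x)
    (hH₂ : ∀ y : ℝ, HasDerivAt H₂ (Function.invFun F₂ (-y)) y)
    (u : ℝ → ℝ → ℝ) (hu : ∀ x y : ℝ, u x y = H₁ x + H₂ y) :
    ContDiff ℝ 2 (fun p : ℝ × ℝ => u p.1 p.2) ∧ ¬ IsAffine u ∧
    ∀ B : ℝ → ℝ → ℝ, ∀ x y : ℝ,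
      deriv F₁ (ux u x y) * uxx u x y + 2 * B x y * uxy u x y +
      deriv F₂ (uy u x y) * uyy u x y = 0 := by
  obtain rfl : u = fun x y => H₁ x + H₂ y := funext₂ hu
  have hd₁ : deriv H₁ = invFun F₁ := funext fun x => (hH₁ x).deriv
  have hd₂ : deriv H₂ = fun y => invFun F₂ (-y) := funext fun y => (hH₂ y).deriv
  have hc₁ : ContDiff ℝ 2 H₁ :=
    contDiff_succ_of_hasDerivAt (n := 1) hH₁
      (contDiff_invFun_of_deriv_pos hF₁ one_ne_zero hp₁ hb₁.2)
  have hc₂ : ContDiff ℝ 2 H₂ :=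
    contDiff_succ_of_hasDerivAt (n := 1) hH₂
      ((contDiff_invFun_of_deriv_pos hF₂ one_ne_zero hp₂ hb₂.2).comp contDiff_neg)
  refine ⟨(hc₁.comp contDiff_fst).add (hc₂.comp contDiff_snd), fun h => ?_, fun B x y => ?_⟩
  · obtain ⟨a, ha⟩ := h.exists_forall_ux_eq
    have h01 := (ha 0 0).trans (ha 1 0).symm
    rw [ux_separated, ux_separated, hd₁] at h01
    exact zero_ne_one ((rightInverse_invFun hb₁.2).injective h01)
  · have hdiff₁ := hF₁.differentiable one_ne_zero
    have hdiff₂ := hF₂.differentiable one_ne_zero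
    rw [ux_separated, uy_separated, uxx_separated, uxy_separated, uyy_separated, hd₁, hd₂,
      deriv_comp_neg, deriv_mul_deriv_invFun hdiff₁ hp₁ hb₁.2, mul_neg,
      deriv_mul_deriv_invFun hdiff₂ hp₂ hb₂.2]
    ring
end

section
/- The function u(x,y) = cosh(x) − cosh(y) is a non-affine C² function on ℝ² satisfying u_xx / √(1 + u_x²) + u_yy / √(1 + u_y²) = 0 at every point of ℝ². -/
/-! For a separable `u x y = f x - g y` each term of the equation involves one variable only;
for `f = g = cosh`, `1 + sinh² = cosh²` makes the terms `1` and `-1`. Affine functions obey the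
midpoint rule in `x`, which `cosh` violates at `±1`. -/

open Real

section Separable

variable (f g : ℝ → ℝ) (x y : ℝ)

lemma ux_separable : ux (fun x y => f x - g y) x y = deriv f x :=
  deriv_sub_const (g y)

lemma uy_separable : uy (fun x y => f x - g y) x y = -deriv g y :=
  deriv_const_sub (f x)

lemma uxx_separable : uxx (fun x y => f x - g y) x y = deriv (deriv f) x := by
  simp only [uxx, ux_separable]

lemma uyy_separable : uyy (fun x y => f x - g y) x y = -deriv (deriv g) y := by
  simp only [uyy, uy_separable]
  exact deriv.neg

end Separable

lemma IsAffine.add_neg_eq {u : ℝ → ℝ → ℝ} (hu : IsAffine u) (x y : ℝ) :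
    u x y + u (-x) y = 2 * u 0 y := by
  obtain ⟨a, b, c, h⟩ := hu
  rw [h, h, h]
  ring

lemma sqrt_one_add_sinh_sq (x : ℝ) : √(1 + sinh x ^ 2) = cosh x := by
  rw [← cosh_sq', sqrt_sq (cosh_pos x).le]

theorem stmt9 (u : ℝ → ℝ → ℝ) (hu : ∀ x y : ℝ, u x y = Real.cosh x - Real.cosh y) :
    ContDiff ℝ 2 (fun p : ℝ × ℝ => u p.1 p.2) ∧ ¬ IsAffine u ∧
    ∀ x y : ℝ, uxx u x y / Real.sqrt (1 + (ux u x y) ^ 2) +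
      uyy u x y / Real.sqrt (1 + (uy u x y) ^ 2) = 0 := by
  obtain rfl : u = fun x y => cosh x - cosh y := funext₂ hu
  refine ⟨by fun_prop, fun h_aff => ?_, fun x y => ?_⟩
  · have h_mid := h_aff.add_neg_eq 1 0
    simp only [cosh_neg, cosh_zero] at h_mid
    exact (one_lt_cosh.mpr one_ne_zero).ne' (by linarith)
  · rw [ux_separable, uy_separable, uxx_separable, uyy_separable]
    simp only [Real.deriv_cosh, Real.deriv_sinh, neg_sq, sqrt_one_add_sinh_sq, neg_div,
      div_self (cosh_pos _).ne']
    ring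
end

section
/- The function u(x,y) = (9/4)·(|x|^(4/3) − |y|^(4/3)) satisfies u_x²·u_xx + 2·u_x·u_y·u_xy + u_y²·u_yy = 0 at every point (x,y) ∈ ℝ² with x ≠ 0 and y ≠ 0. -/
/-!
Writing `f t = 9/4 |t|^(4/3)`, we have `u x y = f x - f y`, so `u_xy = 0` and the operator splits
as `f'(x)² f''(x) - f'(y)² f''(y)`. Now `f' t = 3 t |t|^(-2/3)` is three times the real cube root,
so `f'³ = 27 t`; differentiating gives `3 f'² f'' = 27` away from the origin, and the two terms
cancel.
-/

section Separable

variable (f g : ℝ → ℝ) (x y : ℝ)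

theorem ux_add_separable : ux (fun x y => f x + g y) x y = deriv f x :=
  deriv_add_const _

theorem uy_add_separable : uy (fun x y => f x + g y) x y = deriv g y :=
  deriv_const_add _

theorem uxx_add_separable : uxx (fun x y => f x + g y) x y = deriv (deriv f) x := by
  simp only [uxx, ux_add_separable]

theorem uxy_add_separable : uxy (fun x y => f x + g y) x y = 0 := by
  simp only [uxy, ux_add_separable, deriv_const]

theorem uyy_add_separable : uyy (fun x y => f x + g y) x y = deriv (deriv g) y := by
  simp only [uyy, uy_add_separable]

theorem aronsson_add_separable :
    let u := fun x y => f x + g y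
    (ux u x y) ^ 2 * uxx u x y + 2 * ux u x y * uy u x y * uxy u x y +
      (uy u x y) ^ 2 * uyy u x y =
    deriv f x ^ 2 * deriv (deriv f) x + deriv g y ^ 2 * deriv (deriv g) y := by
  simp only [ux_add_separable, uy_add_separable, uxx_add_separable, uxy_add_separable,
    uyy_add_separable]
  ring

end Separable

theorem sq_mul_deriv_of_pow_three_eq {g : ℝ → ℝ} {t : ℝ} (c : ℝ) (hg : DifferentiableAt ℝ g t)
    (hcube : ∀ s, g s ^ 3 = c * s) : g t ^ 2 * deriv g t = c / 3 := by
  have hpow : HasDerivAt (fun s => g s ^ 3) (3 * g t ^ 2 * deriv g t) t := by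
    simpa using hg.hasDerivAt.fun_pow 3
  have hlin : HasDerivAt (fun s => g s ^ 3) c t := by
    simpa [hcube] using (hasDerivAt_id t).const_mul c
  linarith [hpow.unique hlin]

theorem deriv_abs_rpow_four_thirds :
    deriv (fun t : ℝ => 9 / 4 * |t| ^ ((4 : ℝ) / 3)) = fun t => 3 * t * |t| ^ (-(2 : ℝ) / 3) := by
  funext t
  convert ((hasDerivAt_abs_rpow t (p := 4 / 3) (by norm_num)).const_mul (9 / 4)).deriv using 1
  norm_num
  ring

theorem three_mul_mul_abs_rpow_neg_two_thirds_pow_three (t : ℝ) :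
    (3 * t * |t| ^ (-(2 : ℝ) / 3)) ^ 3 = 27 * t := by
  rcases eq_or_ne t 0 with rfl | ht
  · simp
  have hcube : (|t| ^ (-(2 : ℝ) / 3)) ^ 3 = (t ^ 2)⁻¹ := by
    rw [← Real.rpow_natCast, ← Real.rpow_mul (abs_nonneg t)]
    norm_num [Real.rpow_neg (abs_nonneg t), sq_abs]
  rw [mul_pow, hcube]
  field_simp
  ring

theorem differentiableAt_mul_abs_rpow_neg_two_thirds {t : ℝ} (ht : t ≠ 0) :
    DifferentiableAt ℝ (fun t : ℝ => 3 * t * |t| ^ (-(2 : ℝ) / 3)) t := by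
  have habs : DifferentiableAt ℝ (fun t : ℝ => |t|) t := (hasDerivAt_abs ht).differentiableAt
  exact (differentiableAt_id.const_mul 3).mul (habs.rpow_const (Or.inl (abs_ne_zero.2 ht)))

theorem aronsson_abs_rpow_four_thirds {t : ℝ} (ht : t ≠ 0) :
    let f := fun t : ℝ => 9 / 4 * |t| ^ ((4 : ℝ) / 3)
    deriv f t ^ 2 * deriv (deriv f) t = 9 := by
  simp only [deriv_abs_rpow_four_thirds]
  rw [sq_mul_deriv_of_pow_three_eq 27 (differentiableAt_mul_abs_rpow_neg_two_thirds ht)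
    three_mul_mul_abs_rpow_neg_two_thirds_pow_three]
  norm_num

theorem stmt16 (u : ℝ → ℝ → ℝ)
    (hu : ∀ x y : ℝ, u x y = (9/4) * (|x| ^ ((4:ℝ)/3) - |y| ^ ((4:ℝ)/3))) :
    ∀ x y : ℝ, x ≠ 0 → y ≠ 0 →
      (ux u x y) ^ 2 * uxx u x y + 2 * ux u x y * uy u x y * uxy u x y +
      (uy u x y) ^ 2 * uyy u x y = 0 := by
  intro x y hx hy
  set f := fun t : ℝ => 9 / 4 * |t| ^ ((4 : ℝ) / 3)
  have hsep : u = fun x y => f x + (-f) y := by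
    funext x y
    simp only [hu, f, Pi.neg_apply]
    ring
  subst hsep
  simp only [aronsson_add_separable, deriv.neg', deriv.fun_neg]
  rw [aronsson_abs_rpow_four_thirds hx, neg_sq, mul_neg, aronsson_abs_rpow_four_thirds hy]
  norm_num
end

section
/- Let c ∈ ℝ and let h, g ∈ C²(ℝ) satisfy (1 + h'(x)²)·h''(x) = c and (1 + g'(y)²)·g''(y) = −c for all x, y. Then u(x,y) = h(x) + g(y) satisfies (1 + u_x²)·u_xx + 2·u_x·u_y·u_xy + (1 + u_y²)·u_yy = 0 on ℝ²; moreover u is affine if and only if c = 0. -/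
/-! For a separable `u = h(x) + g(y)` the mixed derivative vanishes and the minimal surface
operator splits as `(1 + h'²) h'' + (1 + g'²) g'' = c - c = 0`. If `u` is affine then `h'' = 0`,
so `c = 0`; conversely `c = 0` forces `h'' = g'' = 0` because `1 + t² > 0`, and a `C²` function
with vanishing second derivative is affine. -/

section Separable

variable {u : ℝ → ℝ → ℝ} {h g : ℝ → ℝ}

lemma ux_of_eq_add (hu : ∀ x y, u x y = h x + g y) (x y : ℝ) : ux u x y = deriv h x := by
  simp [ux, hu]

lemma uy_of_eq_add (hu : ∀ x y, u x y = h x + g y) (x y : ℝ) : uy u x y = deriv g y := by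
  simp [uy, hu]

lemma uxx_of_eq_add (hu : ∀ x y, u x y = h x + g y) (x y : ℝ) :
    uxx u x y = deriv (deriv h) x := by
  simp [uxx, ux_of_eq_add hu]

lemma uxy_of_eq_add (hu : ∀ x y, u x y = h x + g y) (x y : ℝ) : uxy u x y = 0 := by
  simp [uxy, ux_of_eq_add hu]

lemma uyy_of_eq_add (hu : ∀ x y, u x y = h x + g y) (x y : ℝ) :
    uyy u x y = deriv (deriv g) y := by
  simp [uyy, uy_of_eq_add hu]

end Separable

lemma uxx_eq_zero_of_isAffine {u : ℝ → ℝ → ℝ} (hu : IsAffine u) (x y : ℝ) : uxx u x y = 0 := by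
  obtain ⟨a, b, c, hu⟩ := hu
  have hux : ∀ x y, ux u x y = a := fun x y => by simp [ux, hu]
  simp [uxx, hux]

lemma deriv_deriv_eq_zero_of_one_add_sq_mul_eq_zero {f : ℝ → ℝ} {x : ℝ}
    (hf : (1 + deriv f x ^ 2) * deriv (deriv f) x = 0) : deriv (deriv f) x = 0 :=
  (mul_eq_zero.mp hf).resolve_left (by positivity)

lemma eq_affine_of_deriv_deriv_eq_zero {𝕜 : Type*} [RCLike 𝕜] {f : 𝕜 → 𝕜}
    (hf : ContDiff 𝕜 2 f) (hf'' : ∀ x, deriv (deriv f) x = 0) (x : 𝕜) :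
    f x = deriv f 0 * x + f 0 := by
  have hf' : ∀ x, deriv f x = deriv f 0 :=
    fun x => is_const_of_deriv_eq_zero hf.differentiable_deriv_two hf'' x 0
  have hline : ∀ x, HasDerivAt (fun x => deriv f 0 * x + f 0) (deriv f 0) x := fun x => by
    simpa using ((hasDerivAt_id x).const_mul (deriv f 0)).add_const (f 0)
  refine isOpen_univ.eqOn_of_deriv_eq isPreconnected_univ
    (hf.differentiable two_ne_zero).differentiableOn
    (fun x _ => (hline x).differentiableAt.differentiableWithinAt)
    (fun x _ => by rw [hf' x, (hline x).deriv]) (Set.mem_univ 0) (by simp) (Set.mem_univ x)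

theorem stmt19 (c : ℝ) (h g : ℝ → ℝ) (hC : ContDiff ℝ 2 h) (gC : ContDiff ℝ 2 g)
    (hode : ∀ x : ℝ, (1 + (deriv h x) ^ 2) * deriv (deriv h) x = c)
    (gode : ∀ y : ℝ, (1 + (deriv g y) ^ 2) * deriv (deriv g) y = -c)
    (u : ℝ → ℝ → ℝ) (hu : ∀ x y : ℝ, u x y = h x + g y) :
    (∀ x y : ℝ, (1 + (ux u x y) ^ 2) * uxx u x y +
      2 * ux u x y * uy u x y * uxy u x y +
      (1 + (uy u x y) ^ 2) * uyy u x y = 0) ∧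
    (IsAffine u ↔ c = 0) := by
  refine ⟨fun x y => ?_, ⟨fun haff => ?_, fun hc => ?_⟩⟩
  · rw [ux_of_eq_add hu, uy_of_eq_add hu, uxx_of_eq_add hu, uxy_of_eq_add hu,
      uyy_of_eq_add hu, hode x, gode y]
    ring
  · rw [← hode 0, ← uxx_of_eq_add hu 0 0, uxx_eq_zero_of_isAffine haff, mul_zero]
  · subst hc
    have hlin := eq_affine_of_deriv_deriv_eq_zero hC
      fun x => deriv_deriv_eq_zero_of_one_add_sq_mul_eq_zero (hode x)
    have glin := eq_affine_of_deriv_deriv_eq_zero gC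
      fun y => deriv_deriv_eq_zero_of_one_add_sq_mul_eq_zero (by rw [gode y, neg_zero])
    exact ⟨deriv h 0, deriv g 0, h 0 + g 0, fun x y => by rw [hu, hlin, glin]; ring⟩
end
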